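/- arXiv:1006.4445 — 9 statements merged into one kernel-verified Lean document; each statement's English description precedes it below -/
import Mathlib

section
/- The Pogorelov map Φ : H³ × H³ → ℝ³ × ℝ³, defined by Φ(x,y) = (2x⃗/(x₀+y₀), 2y⃗/(x₀+y₀)), is injective: if x, y, x', y' lie on the hyperboloid H³ and Φ(x,y) = Φ(x',y'), then x = x' and y = y'. -/
noncomputable section

/-- Minkowski inner product on ℝ⁴: ⟨x,y⟩ = −x₀y₀ + x₁y₁ + x₂y₂ + x₃y₃. -/
def mink (x y : Fin 4 → ℝ) : ℝ :=
  -(x 0 * y 0) + x 1 * y 1 + x 2 * y 2 + x 3 * y 3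

/-- The hyperboloid model of hyperbolic 3-space. -/
def Hyp : Set (Fin 4 → ℝ) := {x | 0 < x 0 ∧ mink x x = -1}

/-- Spatial part x⃗ of x = (x₀, x⃗). -/
def spat (x : Fin 4 → ℝ) : Fin 3 → ℝ := fun i => x i.succ

/-- The Pogorelov map Φ(x,y) = (2x⃗/(x₀+y₀), 2y⃗/(x₀+y₀)). -/
def pog (x y : Fin 4 → ℝ) : (Fin 3 → ℝ) × (Fin 3 → ℝ) :=
  ((2 / (x 0 + y 0)) • spat x, (2 / (x 0 + y 0)) • spat y)

/-! On `H³` the time coordinate is the positive root of `x₀² = 1 + |x⃗|²`. If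
`Φ(x, y) = Φ(x', y')`, then `x⃗' = t x⃗` and `y⃗' = t y⃗` with `t = (x'₀ + y'₀)/(x₀ + y₀) > 0`,
so `(x'₀ - t x₀)(x'₀ + t x₀) = 1 - t² = (y'₀ - t y₀)(y'₀ + t y₀)`. The two differences
`x'₀ - t x₀` and `y'₀ - t y₀` add up to `0` while the second factors are positive, hence
`t = 1`; then `x⃗' = x⃗`, `y⃗' = y⃗`, and the time coordinates agree as positive roots. -/

lemma ext_time_spat {x y : Fin 4 → ℝ} (h0 : x 0 = y 0) (hs : spat x = spat y) : x = y := by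
  funext i
  induction i using Fin.cases with
  | zero => exact h0
  | succ i => exact congrFun hs i

lemma mink_self (x : Fin 4 → ℝ) : mink x x = -x 0 ^ 2 + ∑ i, spat x i ^ 2 := by
  rw [mink, Fin.sum_univ_three]
  show _ = -x 0 ^ 2 + (x 1 ^ 2 + x 2 ^ 2 + x 3 ^ 2)
  ring

namespace Hyp

lemma time_sq {x : Fin 4 → ℝ} (hx : x ∈ Hyp) : x 0 ^ 2 = 1 + ∑ i, spat x i ^ 2 := by
  linarith [hx.2, mink_self x]

lemma time_sq_of_spat_eq_smul {x x' : Fin 4 → ℝ} (hx : x ∈ Hyp) (hx' : x' ∈ Hyp) {t : ℝ}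
    (hs : spat x' = t • spat x) : x' 0 ^ 2 = 1 - t ^ 2 + t ^ 2 * x 0 ^ 2 := by
  rw [time_sq hx', time_sq hx, hs]
  simp only [Pi.smul_apply, smul_eq_mul, mul_pow, ← Finset.mul_sum]
  ring

lemma eq_of_spat_eq {x y : Fin 4 → ℝ} (hx : x ∈ Hyp) (hy : y ∈ Hyp) (hs : spat x = spat y) :
    x = y := by
  refine ext_time_spat ?_ hs
  have hsq : x 0 ^ 2 = y 0 ^ 2 := by rw [time_sq hx, time_sq hy, hs]
  exact (pow_left_inj₀ hx.1.le hy.1.le two_ne_zero).1 hsq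

lemma scale_eq_one {x y x' y' : Fin 4 → ℝ} (hx : x ∈ Hyp) (hy : y ∈ Hyp) (hx' : x' ∈ Hyp)
    (hy' : y' ∈ Hyp) {t : ℝ} (ht : 0 < t) (hsx : spat x' = t • spat x)
    (hsy : spat y' = t • spat y) (hsum : x' 0 + y' 0 = t * (x 0 + y 0)) : t = 1 := by
  have hxt := time_sq_of_spat_eq_smul hx hx' hsx
  have hyt := time_sq_of_spat_eq_smul hy hy' hsy
  have hu : (x' 0 - t * x 0) * (x' 0 + t * x 0) = 1 - t ^ 2 := by linear_combination hxt
  have hv : (y' 0 - t * y 0) * (y' 0 + t * y 0) = 1 - t ^ 2 := by linear_combination hyt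
  have hA : 0 < x' 0 + t * x 0 := by nlinarith [hx.1, hx'.1]
  have hB : 0 < y' 0 + t * y 0 := by nlinarith [hy.1, hy'.1]
  have hvu : y' 0 - t * y 0 = -(x' 0 - t * x 0) := by linear_combination hsum
  have hu0 : x' 0 - t * x 0 = 0 := by
    rw [hvu, ← hu] at hv
    nlinarith
  nlinarith

end Hyp

lemma smul_spat_eq_of_pog_eq {x y x' y' : Fin 4 → ℝ} (hs : x 0 + y 0 ≠ 0)
    (hs' : x' 0 + y' 0 ≠ 0) (h : pog x y = pog x' y') :
    spat x' = ((x' 0 + y' 0) / (x 0 + y 0)) • spat x ∧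
      spat y' = ((x' 0 + y' 0) / (x 0 + y 0)) • spat y := by
  have key : ∀ v w : Fin 3 → ℝ, (2 / (x 0 + y 0)) • v = (2 / (x' 0 + y' 0)) • w →
      w = ((x' 0 + y' 0) / (x 0 + y 0)) • v := by
    intro v w hvw
    rw [← inv_smul_eq_iff₀ (by positivity), smul_smul] at hvw
    rw [← hvw]
    congr 1
    field_simp
  exact ⟨key _ _ (congrArg Prod.fst h), key _ _ (congrArg Prod.snd h)⟩

/-- The Pogorelov map is injective on H³ × H³. -/
theorem pogorelov_injective (x y x' y' : Fin 4 → ℝ)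
    (hx : x ∈ Hyp) (hy : y ∈ Hyp) (hx' : x' ∈ Hyp) (hy' : y' ∈ Hyp)
    (h : pog x y = pog x' y') : x = x' ∧ y = y' := by
  have hs : 0 < x 0 + y 0 := add_pos hx.1 hy.1
  have hs' : 0 < x' 0 + y' 0 := add_pos hx'.1 hy'.1
  obtain ⟨hsx, hsy⟩ := smul_spat_eq_of_pog_eq hs.ne' hs'.ne' h
  have ht : (x' 0 + y' 0) / (x 0 + y 0) = 1 :=
    Hyp.scale_eq_one hx hy hx' hy' (div_pos hs' hs) hsx hsy (by field_simp)
  rw [ht, one_smul] at hsx hsy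
  exact ⟨Hyp.eq_of_spat_eq hx hx' hsx.symm, Hyp.eq_of_spat_eq hy hy' hsy.symm⟩
end
end

section
/- The Pogorelov map Φ : H³ × H³ → ℝ³ × ℝ³, with H³ × H³ carrying the subspace topology from ℝ⁴ × ℝ⁴, is a topological embedding, i.e. it is injective, continuous, and a homeomorphism onto its image. -/
/-! Write `s = x₀ + y₀` and `(u, v) = Φ(x, y)`. Since `|x⃗|² = x₀² - 1` and `|y⃗|² = y₀² - 1`,
one finds `(|u|² - |v|² + 4) / 8 = x₀ / s` and `4 (x₀ / s)² - |u|² = 4 / s²`; these two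
continuous functions of `(u, v)` recover `s`, hence `x` and `y`. So `Φ` has a left inverse that is
continuous on a set containing its image, which makes the continuous map `Φ` an embedding. -/

noncomputable section

/-- The Pogorelov map, as a map from H³ × H³ (with the subspace topology from
ℝ⁴ × ℝ⁴) to ℝ³ × ℝ³. -/
def pogSub (p : Hyp × Hyp) : (Fin 3 → ℝ) × (Fin 3 → ℝ) :=
  pog p.1.1 p.2.1

open Topology Set Matrix

theorem Topology.IsEmbedding.of_comp_of_continuousOn_range {X Y Z : Type*} [TopologicalSpace X]
    [TopologicalSpace Y] [TopologicalSpace Z] {f : X → Y} {g : Y → Z} (hf : Continuous f)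
    (hg : ContinuousOn g (range f)) (hgf : IsEmbedding (g ∘ f)) : IsEmbedding f :=
  IsEmbedding.subtypeVal.comp <| IsEmbedding.of_comp hf.rangeFactorization
    (continuousOn_iff_continuous_domRestrict.1 hg) hgf

theorem mink_eq_spat_dotProduct_sub (x y : Fin 4 → ℝ) :
    mink x y = spat x ⬝ᵥ spat y - x 0 * y 0 := by
  simp only [mink, dotProduct, spat, Fin.sum_univ_three, Fin.succ_zero_eq_one, Fin.succ_one_eq_two,
    Fin.reduceSucc]
  ring

theorem spat_dotProduct_self_of_mem_Hyp {x : Fin 4 → ℝ} (hx : x ∈ Hyp) :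
    spat x ⬝ᵥ spat x = x 0 ^ 2 - 1 := by
  linarith [mink_eq_spat_dotProduct_sub x x ▸ hx.2]

theorem continuousOn_pog :
    ContinuousOn (fun p : (Fin 4 → ℝ) × (Fin 4 → ℝ) => pog p.1 p.2) {p | p.1 0 + p.2 0 ≠ 0} := by
  unfold pog spat
  fun_prop (disch := exact fun _ h => h)

theorem continuous_pogSub : Continuous pogSub :=
  continuousOn_pog.comp_continuous (continuous_subtype_val.prodMap continuous_subtype_val)
    fun p => (add_pos p.1.2.1 p.2.2.1).ne'

def pogRatio (p : (Fin 3 → ℝ) × (Fin 3 → ℝ)) : ℝ := (p.1 ⬝ᵥ p.1 - p.2 ⬝ᵥ p.2 + 4) / 8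

def pogScale (p : (Fin 3 → ℝ) × (Fin 3 → ℝ)) : ℝ := √(4 * pogRatio p ^ 2 - p.1 ⬝ᵥ p.1)

def pogInv (p : (Fin 3 → ℝ) × (Fin 3 → ℝ)) : (Fin 4 → ℝ) × (Fin 4 → ℝ) :=
  ((pogScale p)⁻¹ • vecCons (2 * pogRatio p) p.1,
    (pogScale p)⁻¹ • vecCons (2 * (1 - pogRatio p)) p.2)

theorem continuous_pogScale : Continuous pogScale := by
  unfold pogScale pogRatio
  fun_prop

theorem continuousOn_pogInv : ContinuousOn pogInv {p | pogScale p ≠ 0} := by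
  have hinv : ContinuousOn (fun p => (pogScale p)⁻¹) {p | pogScale p ≠ 0} :=
    continuous_pogScale.continuousOn.inv₀ fun _ h => h
  unfold pogInv pogRatio
  fun_prop

theorem inv_smul_vecCons_mul_smul_spat {c : ℝ} (hc : c ≠ 0) (z : Fin 4 → ℝ) :
    c⁻¹ • vecCons (c * z 0) (c • spat z) = z := by
  change c⁻¹ • vecCons (c • vecHead z) (c • vecTail z) = z
  rw [← smul_cons, cons_head_tail, inv_smul_smul₀ hc]

section
variable {x y : Fin 4 → ℝ} (hx : x ∈ Hyp) (hy : y ∈ Hyp)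
include hx hy

theorem pogRatio_pog : pogRatio (pog x y) = x 0 / (x 0 + y 0) := by
  have hs : 0 < x 0 + y 0 := add_pos hx.1 hy.1
  simp only [pogRatio, pog, dotProduct_smul, smul_dotProduct, smul_eq_mul,
    spat_dotProduct_self_of_mem_Hyp hx, spat_dotProduct_self_of_mem_Hyp hy]
  field_simp
  ring

theorem pogScale_pog : pogScale (pog x y) = 2 / (x 0 + y 0) := by
  have hs : 0 < x 0 + y 0 := add_pos hx.1 hy.1
  have hsq : 4 * pogRatio (pog x y) ^ 2 - (pog x y).1 ⬝ᵥ (pog x y).1 = (2 / (x 0 + y 0)) ^ 2 := by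
    rw [pogRatio_pog hx hy]
    simp only [pog, dotProduct_smul, smul_dotProduct, smul_eq_mul,
      spat_dotProduct_self_of_mem_Hyp hx]
    field_simp
    ring
  rw [pogScale, hsq, Real.sqrt_sq (by positivity)]

theorem pogInv_pog : pogInv (pog x y) = (x, y) := by
  have hs : x 0 + y 0 ≠ 0 := (add_pos hx.1 hy.1).ne'
  have hx0 : 2 * (x 0 / (x 0 + y 0)) = 2 / (x 0 + y 0) * x 0 := by ring
  have hy0 : 2 * (1 - x 0 / (x 0 + y 0)) = 2 / (x 0 + y 0) * y 0 := by field_simp; ring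
  rw [pogInv, pogScale_pog hx hy, pogRatio_pog hx hy, hx0, hy0]
  exact Prod.ext (inv_smul_vecCons_mul_smul_spat (div_ne_zero two_ne_zero hs) x)
    (inv_smul_vecCons_mul_smul_spat (div_ne_zero two_ne_zero hs) y)
end

/-- The Pogorelov map is a topological embedding: injective, continuous, and a
homeomorphism onto its image. -/
theorem pogorelov_isEmbedding : Topology.IsEmbedding pogSub := by
  have hinv : pogInv ∘ pogSub = fun p => (p.1.1, p.2.1) :=
    funext fun p => pogInv_pog p.1.2 p.2.2
  refine .of_comp_of_continuousOn_range continuous_pogSub (continuousOn_pogInv.mono ?_) ?_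
  · rintro _ ⟨p, rfl⟩
    show pogScale (pog p.1.1 p.2.1) ≠ 0
    rw [pogScale_pog p.1.2 p.2.2]
    exact (div_pos two_pos (add_pos p.1.2.1 p.2.2.1)).ne'
  · rw [hinv]
    exact IsEmbedding.subtypeVal.prodMap IsEmbedding.subtypeVal
end
end

section
/- Let x₀, y₀ ∈ ℝ with x₀ ≥ 1 and y₀ ≥ 1, and let λ > 0 satisfy λ(x₀ + y₀) = √(1 + λ²(x₀² − 1)) + √(1 + λ²(y₀² − 1)). Then λ = 1. -/
/-!
The defect `l * x - √(1 + l² (x² - 1))` equals `(l² - 1) / (l * x + √(1 + l² (x² - 1)))`,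
since the squares of the two terms differ by `l² - 1`. The hypothesis says the two defects
(for `x₀` and `y₀`) sum to zero, and both have the sign of `l² - 1`, so `l² = 1`.
-/

open Real

theorem sub_sqrt_eq_div {a b : ℝ} (hb : 0 ≤ b) (h : 0 < a + √b) :
    a - √b = (a ^ 2 - b) / (a + √b) := by
  rw [eq_div_iff h.ne']
  linear_combination -sq_sqrt hb

theorem mul_sub_sqrt_eq_div {x l : ℝ} (hx : 1 ≤ x) (hl : 0 < l) :
    l * x - √(1 + l ^ 2 * (x ^ 2 - 1)) = (l ^ 2 - 1) / (l * x + √(1 + l ^ 2 * (x ^ 2 - 1))) := by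
  have hb : 0 ≤ 1 + l ^ 2 * (x ^ 2 - 1) :=
    add_nonneg zero_le_one (mul_nonneg (sq_nonneg l) (by nlinarith))
  have hpos : 0 < l * x + √(1 + l ^ 2 * (x ^ 2 - 1)) := by positivity
  rw [sub_sqrt_eq_div hb hpos]
  ring_nf

/-- Key real-variable step in the injectivity of the Pogorelov map: if
x₀, y₀ ≥ 1 and l > 0 satisfies
l(x₀ + y₀) = √(1 + l²(x₀² − 1)) + √(1 + l²(y₀² − 1)), then l = 1. -/
theorem lambda_eq_one (x0 y0 l : ℝ) (hx : 1 ≤ x0) (hy : 1 ≤ y0) (hl : 0 < l)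
    (heq : l * (x0 + y0) =
      Real.sqrt (1 + l ^ 2 * (x0 ^ 2 - 1)) + Real.sqrt (1 + l ^ 2 * (y0 ^ 2 - 1))) :
    l = 1 := by
  set A := l * x0 + √(1 + l ^ 2 * (x0 ^ 2 - 1))
  set B := l * y0 + √(1 + l ^ 2 * (y0 ^ 2 - 1))
  have hA : 0 < A := by positivity
  have hB : 0 < B := by positivity
  have hsum : (l ^ 2 - 1) * (A⁻¹ + B⁻¹) = 0 := by
    rw [mul_add, ← div_eq_mul_inv, ← div_eq_mul_inv, ← mul_sub_sqrt_eq_div hx hl,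
      ← mul_sub_sqrt_eq_div hy hl]
    linarith
  have hsq : l ^ 2 = 1 := by
    have : A⁻¹ + B⁻¹ ≠ 0 := by positivity
    linarith [(mul_eq_zero.mp hsum).resolve_right this]
  exact (pow_eq_one_iff_of_nonneg hl.le two_ne_zero).mp hsq
end

section
/- The product B³ × B³ of two copies of the open Euclidean unit ball B³ = {a ∈ ℝ³ | ‖a‖ < 1} is contained in the image of the Pogorelov map Φ : H³ × H³ → ℝ³ × ℝ³. -/
/-!
Given `a, b` in the unit ball, look for preimages of the form `x = (p, t a)`, `y = (q, t b)`.
Then `Φ(x, y) = (a, b)` exactly when `p + q = 2t`, and `x, y ∈ H³` exactly when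
`p² = 1 + t²|a|²` and `q² = 1 + t²|b|²`. Subtracting the two quadratic equations gives
`p - q = t(|a|² - |b|²)/2`, and what remains is `t² D = 16` with
`D = (4 - |a|² - |b|²)² - 4|a|²|b|²`, which is positive for `|a|, |b| < 1`.
-/

noncomputable section

/-- Euclidean norm on ℝ³. -/
def enorm3 (a : Fin 3 → ℝ) : ℝ := Real.sqrt (a 0 ^ 2 + a 1 ^ 2 + a 2 ^ 2)

/-- The open Euclidean unit ball B³ ⊂ ℝ³. -/
def ball3 : Set (Fin 3 → ℝ) := {a | enorm3 a < 1}

def sqNorm3 (a : Fin 3 → ℝ) : ℝ := a 0 ^ 2 + a 1 ^ 2 + a 2 ^ 2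

lemma sqNorm3_nonneg (a : Fin 3 → ℝ) : 0 ≤ sqNorm3 a := by
  unfold sqNorm3; positivity

lemma sqNorm3_smul (t : ℝ) (a : Fin 3 → ℝ) : sqNorm3 (t • a) = t ^ 2 * sqNorm3 a := by
  simp only [sqNorm3, Pi.smul_apply, smul_eq_mul]
  ring

lemma mem_ball3_iff {a : Fin 3 → ℝ} : a ∈ ball3 ↔ sqNorm3 a < 1 := by
  change √(sqNorm3 a) < 1 ↔ _
  rw [Real.sqrt_lt' one_pos, one_pow]

lemma cons_mem_Hyp_iff {c : ℝ} {v : Fin 3 → ℝ} :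
    (Fin.cons c v : Fin 4 → ℝ) ∈ Hyp ↔ 0 < c ∧ c ^ 2 = 1 + sqNorm3 v := by
  have : mink (Fin.cons c v) (Fin.cons c v) = -c ^ 2 + sqNorm3 v := by
    change -(c * c) + v 0 * v 0 + v 1 * v 1 + v 2 * v 2 = _
    rw [sqNorm3]
    ring
  simp only [Hyp, Set.mem_ofPred_eq, this, Fin.cons_zero]
  constructor <;> rintro ⟨hc, h⟩ <;> exact ⟨hc, by linarith⟩

lemma spat_cons (c : ℝ) (v : Fin 3 → ℝ) : spat (Fin.cons c v) = v :=
  funext fun i => Fin.cons_succ (α := fun _ => ℝ) c v i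

lemma pog_cons_smul {p q t : ℝ} (a b : Fin 3 → ℝ) (hpq : p + q = 2 * t) (ht : t ≠ 0) :
    pog (Fin.cons p (t • a)) (Fin.cons q (t • b)) = (a, b) := by
  have h : 2 / (p + q) * t = 1 := by
    rw [hpq]
    field_simp
  simp only [pog, spat_cons, Fin.cons_zero, smul_smul, h, one_smul]

lemma exists_pogorelov_heights {α β : ℝ} (hα₀ : 0 ≤ α) (hα₁ : α < 1) (hβ₀ : 0 ≤ β)
    (hβ₁ : β < 1) :
    ∃ t p q : ℝ, 0 < p ∧ 0 < q ∧ p + q = 2 * t ∧ p ^ 2 = 1 + t ^ 2 * α ∧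
      q ^ 2 = 1 + t ^ 2 * β := by
  have hD : 0 < (4 - α - β) ^ 2 - 4 * α * β := by nlinarith
  set s := √((4 - α - β) ^ 2 - 4 * α * β)
  have hs : 0 < s := Real.sqrt_pos.2 hD
  have hs2 : s ^ 2 = (4 - α - β) ^ 2 - 4 * α * β := Real.sq_sqrt hD.le
  refine ⟨4 / s, (4 + α - β) / s, (4 + β - α) / s, div_pos (by linarith) hs,
    div_pos (by linarith) hs, ?_, ?_, ?_⟩
  · field_simp
    ring
  · field_simp
    rw [hs2]
    ring
  · field_simp
    rw [hs2]
    ring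

/-- B³ × B³ is contained in the image of the Pogorelov map. -/
theorem ball_prod_ball_subset_image :
    ball3 ×ˢ ball3 ⊆
      (fun p : (Fin 4 → ℝ) × (Fin 4 → ℝ) => pog p.1 p.2) '' (Hyp ×ˢ Hyp) := by
  rintro ⟨a, b⟩ ⟨ha, hb⟩
  obtain ⟨t, p, q, hp, hq, hpq, hpa, hqb⟩ :=
    exists_pogorelov_heights (sqNorm3_nonneg a) (mem_ball3_iff.1 ha)
      (sqNorm3_nonneg b) (mem_ball3_iff.1 hb)
  refine ⟨(Fin.cons p (t • a), Fin.cons q (t • b)), ⟨?_, ?_⟩, ?_⟩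
  · exact cons_mem_Hyp_iff.2 ⟨hp, by rw [sqNorm3_smul, hpa]⟩
  · exact cons_mem_Hyp_iff.2 ⟨hq, by rw [sqNorm3_smul, hqb]⟩
  · exact pog_cons_smul a b hpq (by linarith)
end
end

section
/- Let A be a 4×4 real matrix with Aᵀ η A = η (where η = diag(−1,1,1,1)) and A₀₀ ≥ 1, so that A maps the hyperboloid H³ to itself. Then there exists a Euclidean isometry B of ℝ³ (a rotation composed with a translation, i.e. B(v) = D + Rv with R an orthogonal 3×3 matrix and D ∈ ℝ³) such that for every x ∈ H³, writing Φ(x, Ax) = (a⃗, b⃗), one has b⃗ = B(a⃗). -/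
noncomputable section
open Matrix

/-- The matrix η = diag(−1,1,1,1) of the Minkowski inner product. -/
def eta : Matrix (Fin 4) (Fin 4) ℝ := Matrix.diagonal ![(-1 : ℝ), 1, 1, 1]

/-!
Write `A = [[α, wᵀ], [a, M]]` and `y = A x`. Then `y⃗ - (M - a wᵀ / (1 + α)) x⃗ = (x₀ + y₀) / (1 + α) • a`,
so after scaling by `2 / (x₀ + y₀)` the Pogorelov map becomes the affine map
`v ↦ 2 a / (1 + α) + R v` with `R = M - a wᵀ / (1 + α)`, independently of `x`. The relations
`M Mᵀ = 1 + a aᵀ`, `M w = α a`, `|w|² = α² - 1` read off from `A η Aᵀ = η` make `R` orthogonal,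
and `x₀ + y₀ > 0` on `H³` because `|w · x⃗| ≤ |w| |x⃗| < α x₀` by Cauchy–Schwarz.
-/

theorem Matrix.mul_mul_transpose_eq_of_transpose_mul_mul_eq {ι R : Type*} [Fintype ι]
    [DecidableEq ι] [CommRing R] {A η : Matrix ι ι R} (hη : η * η = 1)
    (hA : Aᵀ * η * A = η) : A * η * Aᵀ = η := by
  have hleft : (η * Aᵀ * η) * A = 1 := by
    rw [mul_assoc, mul_assoc, ← mul_assoc Aᵀ, hA, hη]
  calc A * η * Aᵀ = A * (η * Aᵀ * η) * η := by simp only [mul_assoc, hη, mul_one]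
    _ = η := by rw [mul_eq_one_comm.mp hleft, one_mul]

def minkowskiMatrix (n : ℕ) : Matrix (Fin (n + 1)) (Fin (n + 1)) ℝ :=
  diagonal (Fin.cons (-1) 1)

theorem eta_eq_minkowskiMatrix : eta = minkowskiMatrix 3 := by
  ext i j
  fin_cases i <;> fin_cases j <;> rfl

theorem minkowskiMatrix_mul_self (n : ℕ) : minkowskiMatrix n * minkowskiMatrix n = 1 := by
  rw [minkowskiMatrix, diagonal_mul_diagonal, ← diagonal_one]
  congr 1
  ext i
  cases i using Fin.cases <;> simp

theorem mul_minkowskiMatrix_mul_transpose_apply {n : ℕ} (A : Matrix (Fin (n + 1)) (Fin (n + 1)) ℝ)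
    (p q : Fin (n + 1)) :
    (A * minkowskiMatrix n * Aᵀ) p q = -(A p 0 * A q 0) + ∑ k : Fin n, A p k.succ * A q k.succ := by
  rw [mul_apply, Fin.sum_univ_succ]
  simp [minkowskiMatrix, mul_diagonal]

def pogorelovRotation {n : ℕ} (A : Matrix (Fin (n + 1)) (Fin (n + 1)) ℝ) :
    Matrix (Fin n) (Fin n) ℝ :=
  of fun i j => A i.succ j.succ - A i.succ 0 * A 0 j.succ / (1 + A 0 0)

def pogorelovTranslation {n : ℕ} (A : Matrix (Fin (n + 1)) (Fin (n + 1)) ℝ) : Fin n → ℝ :=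
  (2 / (1 + A 0 0)) • fun i => A i.succ 0

theorem tail_mulVec_eq {n : ℕ} (A : Matrix (Fin (n + 1)) (Fin (n + 1)) ℝ) (hA : 1 + A 0 0 ≠ 0)
    (x : Fin (n + 1) → ℝ) :
    Fin.tail (A *ᵥ x) = ((x 0 + (A *ᵥ x) 0) / (1 + A 0 0)) • (fun i => A i.succ 0)
      + pogorelovRotation A *ᵥ Fin.tail x := by
  ext i
  simp only [Fin.tail, mulVec, dotProduct, Fin.sum_univ_succ, pogorelovRotation, of_apply,
    Pi.add_apply, Pi.smul_apply, smul_eq_mul, sub_mul, Finset.sum_sub_distrib]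
  have hsum : ∑ k : Fin n, A i.succ 0 * A 0 k.succ / (1 + A 0 0) * x k.succ
      = A i.succ 0 / (1 + A 0 0) * ∑ k : Fin n, A 0 k.succ * x k.succ := by
    rw [Finset.mul_sum]
    exact Finset.sum_congr rfl fun k _ => by ring
  rw [hsum]
  field_simp
  ring

theorem pogorelov_smul_tail_mulVec {n : ℕ} (A : Matrix (Fin (n + 1)) (Fin (n + 1)) ℝ)
    (hA : 1 + A 0 0 ≠ 0) (x : Fin (n + 1) → ℝ) (hx : x 0 + (A *ᵥ x) 0 ≠ 0) :
    (2 / (x 0 + (A *ᵥ x) 0)) • Fin.tail (A *ᵥ x)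
      = pogorelovTranslation A + pogorelovRotation A *ᵥ ((2 / (x 0 + (A *ᵥ x) 0)) • Fin.tail x) := by
  rw [tail_mulVec_eq A hA, smul_add, smul_smul, mulVec_smul, pogorelovTranslation]
  congr 2
  field_simp

def IsFutureTimelike {n : ℕ} (x : Fin (n + 1) → ℝ) : Prop :=
  0 < x 0 ∧ ∑ k : Fin n, x k.succ ^ 2 < x 0 ^ 2

theorem isFutureTimelike_of_mem_Hyp {x : Fin 4 → ℝ} (hx : x ∈ Hyp) : IsFutureTimelike x := by
  obtain ⟨hx0, hxx⟩ := hx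
  refine ⟨hx0, ?_⟩
  simp only [mink] at hxx
  simp only [Fin.sum_univ_three, Fin.succ_zero_eq_one, Fin.succ_one_eq_two, Fin.reduceSucc]
  linarith

section Lorentz

variable {n : ℕ} {A : Matrix (Fin (n + 1)) (Fin (n + 1)) ℝ}
  (hA : A * minkowskiMatrix n * Aᵀ = minkowskiMatrix n)
include hA

theorem sum_sq_row_zero_tail : ∑ k : Fin n, A 0 k.succ ^ 2 = A 0 0 ^ 2 - 1 := by
  have h := congrFun (congrFun hA 0) 0
  rw [mul_minkowskiMatrix_mul_transpose_apply] at h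
  simp only [minkowskiMatrix, diagonal_apply_eq, Fin.cons_zero] at h
  simp only [sq]
  linarith

theorem sum_mul_row_zero_tail (i : Fin n) :
    ∑ k : Fin n, A i.succ k.succ * A 0 k.succ = A i.succ 0 * A 0 0 := by
  have h := congrFun (congrFun hA i.succ) 0
  rw [mul_minkowskiMatrix_mul_transpose_apply] at h
  simp only [minkowskiMatrix, diagonal_apply_ne _ (Fin.succ_ne_zero i)] at h
  linarith

theorem sum_mul_rows_tail (i j : Fin n) :
    ∑ k : Fin n, A i.succ k.succ * A j.succ k.succ = (1 : Matrix (Fin n) (Fin n) ℝ) i j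
      + A i.succ 0 * A j.succ 0 := by
  have h := congrFun (congrFun hA i.succ) j.succ
  rw [mul_minkowskiMatrix_mul_transpose_apply] at h
  simp only [minkowskiMatrix, diagonal_apply, Fin.succ_inj, Fin.cons_succ, Pi.one_apply] at h
  rw [one_apply]
  linarith

theorem pogorelovRotation_mul_transpose (hA00 : 1 + A 0 0 ≠ 0) :
    pogorelovRotation A * (pogorelovRotation A)ᵀ = 1 := by
  ext i j
  have expand : (pogorelovRotation A * (pogorelovRotation A)ᵀ) i j
      = ∑ k : Fin n, A i.succ k.succ * A j.succ k.succ
        - A j.succ 0 / (1 + A 0 0) * ∑ k : Fin n, A i.succ k.succ * A 0 k.succ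
        - A i.succ 0 / (1 + A 0 0) * ∑ k : Fin n, A j.succ k.succ * A 0 k.succ
        + A i.succ 0 / (1 + A 0 0) * (A j.succ 0 / (1 + A 0 0)) * ∑ k : Fin n, A 0 k.succ ^ 2 := by
    simp only [mul_apply, transpose_apply, pogorelovRotation, of_apply, Finset.mul_sum,
      ← Finset.sum_sub_distrib, ← Finset.sum_add_distrib]
    exact Finset.sum_congr rfl fun k _ => by ring
  rw [expand, sum_mul_rows_tail hA, sum_mul_row_zero_tail hA, sum_mul_row_zero_tail hA,
    sum_sq_row_zero_tail hA]
  field_simp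
  ring

theorem IsFutureTimelike.mulVec_apply_zero_pos {x : Fin (n + 1) → ℝ} (hx : IsFutureTimelike x)
    (hA00 : 0 < A 0 0) : 0 < (A *ᵥ x) 0 := by
  obtain ⟨hx0, hx⟩ := hx
  have hcs := Finset.sum_mul_sq_le_sq_mul_sq Finset.univ (fun k : Fin n => A 0 k.succ)
    (fun k => x k.succ)
  rw [sum_sq_row_zero_tail hA] at hcs
  have hlt : (∑ k : Fin n, A 0 k.succ * x k.succ) ^ 2 < (A 0 0 * x 0) ^ 2 := by
    have hnn : 0 ≤ ∑ k : Fin n, x k.succ ^ 2 := by positivity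
    nlinarith [mul_lt_mul_of_pos_left hx (pow_pos hA00 2)]
  have habs := abs_lt.mp (abs_lt_of_sq_lt_sq hlt (by positivity))
  simp only [mulVec, dotProduct, Fin.sum_univ_succ]
  linarith

end Lorentz

/-- For a Lorentz transformation A preserving the upper hyperboloid, there is a
Euclidean isometry B(v) = D + Rv of ℝ³ (R orthogonal) such that for every
x ∈ H³, writing Φ(x, Ax) = (a⃗, b⃗), one has b⃗ = D + R a⃗. -/
theorem pogorelov_isometry (A : Matrix (Fin 4) (Fin 4) ℝ)
    (hA : Aᵀ * eta * A = eta) (hA00 : 1 ≤ A 0 0) :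
    ∃ (R : Matrix (Fin 3) (Fin 3) ℝ) (D : Fin 3 → ℝ),
      R * Rᵀ = 1 ∧
      ∀ x ∈ Hyp, (pog x (A.mulVec x)).2 = D + R.mulVec (pog x (A.mulVec x)).1 := by
  rw [eta_eq_minkowskiMatrix] at hA
  have hL := mul_mul_transpose_eq_of_transpose_mul_mul_eq (minkowskiMatrix_mul_self 3) hA
  have hc : 1 + A 0 0 ≠ 0 := by linarith
  refine ⟨pogorelovRotation A, pogorelovTranslation A, pogorelovRotation_mul_transpose hL hc,
    fun x hx => ?_⟩
  have hAx0 := (isFutureTimelike_of_mem_Hyp hx).mulVec_apply_zero_pos hL (by linarith)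
  exact pogorelov_smul_tail_mulVec A hc x (by linarith [hx.1])
end
end

section
/- Let A be a 4×4 real matrix with Aᵀ η A = η (where η = diag(−1,1,1,1)) and A₀₀ ≥ 1. Define D ∈ ℝ³ by Dᵢ = 2A_{i0}/(1 + A₀₀) and the 3×3 matrix R by R_{ij} = A_{ij} − A_{i0}A_{0j}/(1 + A₀₀), for i,j ∈ {1,2,3}. Then for every x ∈ H³, writing Φ(x, Ax) = (a⃗, b⃗), one has b⃗ = D + R a⃗. -/
noncomputable section
open Matrix

/-!
Write y = Ax. Eliminating `∑ⱼ A_{ij} xⱼ = yᵢ - A_{i0} x₀` and `∑ⱼ A_{0j} xⱼ = y₀ - A₀₀ x₀`, the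
identity `b⃗ = D + R a⃗` becomes a rational identity valid for every matrix, provided the
denominators `x₀ + y₀` and `1 + A₀₀` do not vanish. The Lorentz condition enters through
`y₀ ≥ 1`: with `u = A⁻¹e₀ = (A₀₀, -A₀₁, -A₀₂, -A₀₃)`, which lies on H³ because the rows of `A`
are Minkowski-orthonormal as well, one has `y₀ = -⟨u, x⟩ ≥ 1` by the reverse Cauchy–Schwarz
inequality on H³.
-/

theorem smul_tail_mulVec_eq_add_mulVec_smul_tail {K : Type*} [Field K] {n : ℕ}
    (A : Matrix (Fin (n + 1)) (Fin (n + 1)) K) (x : Fin (n + 1) → K)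
    (hs : x 0 + (A *ᵥ x) 0 ≠ 0) (hc : 1 + A 0 0 ≠ 0) :
    (2 / (x 0 + (A *ᵥ x) 0)) • Fin.tail (A *ᵥ x) =
      (fun i : Fin n => 2 * A i.succ 0 / (1 + A 0 0)) +
        (Matrix.of fun i j : Fin n => A i.succ j.succ - A i.succ 0 * A 0 j.succ / (1 + A 0 0)) *ᵥ
          ((2 / (x 0 + (A *ᵥ x) 0)) • Fin.tail x) := by
  have hrow (i : Fin (n + 1)) : ∑ j : Fin n, A i j.succ * x j.succ = (A *ᵥ x) i - A i 0 * x 0 := by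
    simp [mulVec, dotProduct, Fin.sum_univ_succ]
  set y := A *ᵥ x
  funext i
  have hR : ∑ j : Fin n, (A i.succ j.succ - A i.succ 0 * A 0 j.succ / (1 + A 0 0)) * x j.succ =
      (y i.succ - A i.succ 0 * x 0) - A i.succ 0 / (1 + A 0 0) * (y 0 - A 0 0 * x 0) := by
    simp only [sub_mul, Finset.sum_sub_distrib, hrow, mul_div_right_comm _ (A 0 _), mul_assoc,
      ← Finset.mul_sum]
  simp only [Pi.add_apply, Pi.smul_apply, Fin.tail, smul_eq_mul, mulVec_smul, mulVec, dotProduct,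
    of_apply, hR]
  field_simp
  ring

theorem mink_le_neg_one {u v : Fin 4 → ℝ} (hu : u ∈ Hyp) (hv : v ∈ Hyp) : mink u v ≤ -1 := by
  obtain ⟨hu0, hu⟩ := hu
  obtain ⟨hv0, hv⟩ := hv
  simp only [mink] at *
  set p := u 1 * v 1 + u 2 * v 2 + u 3 * v 3
  have lagrange : p ^ 2 ≤ (u 1 ^ 2 + u 2 ^ 2 + u 3 ^ 2) * (v 1 ^ 2 + v 2 ^ 2 + v 3 ^ 2) := by
    nlinarith [sq_nonneg (u 1 * v 2 - u 2 * v 1), sq_nonneg (u 1 * v 3 - u 3 * v 1),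
      sq_nonneg (u 2 * v 3 - u 3 * v 2)]
  have amgm : 2 * p ≤ (u 1 ^ 2 + u 2 ^ 2 + u 3 ^ 2) + (v 1 ^ 2 + v 2 ^ 2 + v 3 ^ 2) := by
    nlinarith [sq_nonneg (u 1 - v 1), sq_nonneg (u 2 - v 2), sq_nonneg (u 3 - v 3)]
  have hsq : (1 + p) ^ 2 ≤ (u 0 * v 0) ^ 2 := by nlinarith
  nlinarith [abs_le_of_sq_le_sq' hsq (mul_pos hu0 hv0).le]

theorem eta_mul_eta : eta * eta = 1 := by
  rw [eta, diagonal_mul_diagonal, ← diagonal_one]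
  congr 1
  ext i
  fin_cases i <;> norm_num

theorem mul_eta_mul_transpose_eq_eta {A : Matrix (Fin 4) (Fin 4) ℝ} (hA : Aᵀ * eta * A = eta) :
    A * eta * Aᵀ = eta := by
  have hinv : (eta * Aᵀ * eta) * A = 1 := by
    simp only [Matrix.mul_assoc] at hA ⊢
    rw [hA, eta_mul_eta]
  have := congrArg (· * eta) (mul_eq_one_comm.mp hinv)
  simpa [Matrix.mul_assoc, eta_mul_eta] using this

theorem one_le_mulVec_apply_zero {A : Matrix (Fin 4) (Fin 4) ℝ} (hA : Aᵀ * eta * A = eta)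
    (hA00 : 0 < A 0 0) {x : Fin 4 → ℝ} (hx : x ∈ Hyp) : 1 ≤ (A *ᵥ x) 0 := by
  set u : Fin 4 → ℝ := ![A 0 0, -A 0 1, -A 0 2, -A 0 3]
  have hu : u ∈ Hyp := by
    refine ⟨hA00, ?_⟩
    have h00 := congrFun (congrFun (mul_eta_mul_transpose_eq_eta hA) 0) 0
    rw [eta, mul_apply] at h00
    simp only [mul_diagonal, transpose_apply, diagonal_apply_eq, Fin.sum_univ_four, cons_val] at h00
    simp only [mink, u, cons_val]
    linear_combination h00
  have hux : mink u x = -(A *ᵥ x) 0 := by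
    simp only [mink, u, mulVec, dotProduct, Fin.sum_univ_four, cons_val]
    ring
  linarith [mink_le_neg_one hu hx]

/-- For a Lorentz transformation A preserving the upper hyperboloid, with
Dᵢ = 2A_{i0}/(1 + A₀₀) and R_{ij} = A_{ij} − A_{i0}A_{0j}/(1 + A₀₀), for every
x ∈ H³, writing Φ(x, Ax) = (a⃗, b⃗), one has b⃗ = D + R a⃗. -/
theorem pogorelov_isometry_explicit (A : Matrix (Fin 4) (Fin 4) ℝ)
    (hA : Aᵀ * eta * A = eta) (hA00 : 1 ≤ A 0 0)
    (x : Fin 4 → ℝ) (hx : x ∈ Hyp) :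
    (pog x (A.mulVec x)).2 =
      (fun i : Fin 3 => 2 * A i.succ 0 / (1 + A 0 0)) +
        (Matrix.of fun i j : Fin 3 =>
          A i.succ j.succ - A i.succ 0 * A 0 j.succ / (1 + A 0 0)).mulVec
          (pog x (A.mulVec x)).1 := by
  have hy : 1 ≤ (A *ᵥ x) 0 := one_le_mulVec_apply_zero hA (by linarith) hx
  exact smul_tail_mulVec_eq_add_mulVec_smul_tail A x (by linarith [hx.1]) (by linarith)
end
end

section
/- Let A be a 4×4 real matrix with Aᵀ η A = η (where η = diag(−1,1,1,1)) and A₀₀ ≥ 1. Then the 3×3 matrix R defined by R_{ij} = A_{ij} − A_{i0}A_{0j}/(1 + A₀₀), for i,j ∈ {1,2,3}, is orthogonal: R Rᵀ = I. -/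
/-!
Write `t = A₀₀`, `B` for the spatial block of `A`, `a` for its spatial column `A_{i0}` and `b`
for its spatial row `A_{0j}`, so that `R = B - (1 + t)⁻¹ a bᵀ`. Since `η² = 1`, the Lorentz
condition `Aᵀ η A = η` is equivalent to `A η Aᵀ = η`, whose blocks read
`B Bᵀ = 1 + a aᵀ`, `B b = t a` and `b ⬝ b = t² - 1`. Expanding `R Rᵀ` leaves `1` plus
`a aᵀ` times `1 - 2t/(1 + t) + (t² - 1)/(1 + t)² = 0`.
-/

noncomputable section
open Matrix

namespace Matrix

variable {m ι : Type*} [Fintype m] [DecidableEq m] [Fintype ι] [DecidableEq ι]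
  {R K : Type*} [CommRing R] [Field K]

theorem mul_mul_transpose_eq_of_transpose_mul_mul_eq_s8 {J A : Matrix m m R} (hJ : J * J = 1)
    (hA : Aᵀ * J * A = J) : A * J * Aᵀ = J := by
  have hleft : (J * Aᵀ * J) * A = 1 := by
    rw [Matrix.mul_assoc, Matrix.mul_assoc, ← Matrix.mul_assoc Aᵀ, hA, hJ]
  calc A * J * Aᵀ = A * (J * Aᵀ * J) * J := by simp only [Matrix.mul_assoc, hJ, Matrix.mul_one]
    _ = J := by rw [mul_eq_one_comm.mp hleft, Matrix.one_mul]

theorem sub_smul_vecMulVec_mul_transpose_eq_one {B : Matrix ι ι K} {a b : ι → K} {t : K}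
    (ht : 1 + t ≠ 0) (hB : B * Bᵀ = 1 + vecMulVec a a) (hBb : B *ᵥ b = t • a)
    (hb : b ⬝ᵥ b = t ^ 2 - 1) :
    (B - (1 + t)⁻¹ • vecMulVec a b) * (B - (1 + t)⁻¹ • vecMulVec a b)ᵀ = 1 := by
  rw [transpose_sub, transpose_smul, transpose_vecMulVec, Matrix.mul_sub, Matrix.sub_mul,
    Matrix.sub_mul, Matrix.mul_smul, Matrix.smul_mul, Matrix.smul_mul, Matrix.mul_smul, hB,
    mul_vecMulVec, hBb, vecMulVec_mul, vecMul_transpose, hBb, vecMulVec_mul_vecMulVec, hb]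
  ext i k
  simp only [add_apply, sub_apply, smul_apply, vecMulVec_apply, Pi.smul_apply, smul_eq_mul]
  field_simp
  ring

end Matrix

def minkowskiMetric (R : Type*) [Ring R] (n : ℕ) : Matrix (Fin (n + 1)) (Fin (n + 1)) R :=
  diagonal (Fin.cons (-1) 1)

section Minkowski

variable {R : Type*} [Ring R] {n : ℕ}

theorem minkowskiMetric_mul_self : minkowskiMetric R n * minkowskiMetric R n = 1 := by
  rw [minkowskiMetric, diagonal_mul_diagonal, ← diagonal_one]
  congr 1
  ext i
  cases i using Fin.cases <;> simp

theorem minkowskiMetric_zero_zero : minkowskiMetric R n 0 0 = -1 :=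
  diagonal_apply_eq _ _

theorem minkowskiMetric_succ_zero (i : Fin n) : minkowskiMetric R n i.succ 0 = 0 :=
  diagonal_apply_ne _ (Fin.succ_ne_zero i)

theorem minkowskiMetric_succ_succ (i k : Fin n) :
    minkowskiMetric R n i.succ k.succ = (1 : Matrix (Fin n) (Fin n) R) i k := by
  simp [minkowskiMetric, diagonal_apply, one_apply]

theorem mul_minkowskiMetric_mul_transpose_apply (A : Matrix (Fin (n + 1)) (Fin (n + 1)) R)
    (i k : Fin (n + 1)) :
    (A * minkowskiMetric R n * Aᵀ) i k =
      -(A i 0 * A k 0) + ∑ j : Fin n, A i j.succ * A k j.succ := by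
  rw [mul_apply]
  simp [minkowskiMetric, mul_diagonal, Fin.sum_univ_succ]

theorem eta_eq_minkowskiMetric : eta = minkowskiMetric ℝ 3 := by
  rw [eta, minkowskiMetric]
  congr 1
  ext i
  fin_cases i <;> rfl

end Minkowski

def spatialRotation {K : Type*} [Field K] {n : ℕ} (A : Matrix (Fin (n + 1)) (Fin (n + 1)) K) :
    Matrix (Fin n) (Fin n) K :=
  of fun i j => A i.succ j.succ - A i.succ 0 * A 0 j.succ / (1 + A 0 0)

theorem spatialRotation_mul_transpose_self {K : Type*} [Field K] {n : ℕ}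
    {A : Matrix (Fin (n + 1)) (Fin (n + 1)) K}
    (hA : A * minkowskiMetric K n * Aᵀ = minkowskiMetric K n) (hA00 : 1 + A 0 0 ≠ 0) :
    spatialRotation A * (spatialRotation A)ᵀ = 1 := by
  have hentry (i k : Fin (n + 1)) :
      -(A i 0 * A k 0) + ∑ j : Fin n, A i j.succ * A k j.succ = minkowskiMetric K n i k := by
    rw [← mul_minkowskiMetric_mul_transpose_apply, hA]
  set B := A.submatrix Fin.succ Fin.succ
  set a : Fin n → K := fun i => A i.succ 0
  set b : Fin n → K := fun j => A 0 j.succ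
  have hR : spatialRotation A = B - (1 + A 0 0)⁻¹ • vecMulVec a b := by
    ext i j
    simp [spatialRotation, B, a, b, vecMulVec_apply, div_eq_inv_mul]
  have hB : B * Bᵀ = 1 + vecMulVec a a := by
    ext i k
    have := hentry i.succ k.succ
    rw [minkowskiMetric_succ_succ] at this
    simp only [B, a, mul_apply, transpose_apply, submatrix_apply, Matrix.add_apply,
      vecMulVec_apply]
    linear_combination this
  have hBb : B *ᵥ b = A 0 0 • a := by
    ext i
    have := hentry i.succ 0
    rw [minkowskiMetric_succ_zero] at this
    simp only [B, a, b, mulVec, dotProduct, submatrix_apply, Pi.smul_apply, smul_eq_mul]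
    linear_combination this
  have hb : b ⬝ᵥ b = A 0 0 ^ 2 - 1 := by
    have := hentry 0 0
    rw [minkowskiMetric_zero_zero] at this
    simp only [b, dotProduct]
    linear_combination this
  rw [hR]
  exact sub_smul_vecMulVec_mul_transpose_eq_one hA00 hB hBb hb

/-- For a Lorentz transformation A with A₀₀ ≥ 1, the 3×3 matrix
R_{ij} = A_{ij} − A_{i0}A_{0j}/(1 + A₀₀) is orthogonal: R Rᵀ = I. -/
theorem rotation_orthogonal (A : Matrix (Fin 4) (Fin 4) ℝ)
    (hA : Aᵀ * eta * A = eta) (hA00 : 1 ≤ A 0 0) :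
    (Matrix.of fun i j : Fin 3 =>
        A i.succ j.succ - A i.succ 0 * A 0 j.succ / (1 + A 0 0)) *
      (Matrix.of fun i j : Fin 3 =>
        A i.succ j.succ - A i.succ 0 * A 0 j.succ / (1 + A 0 0))ᵀ = 1 := by
  rw [eta_eq_minkowskiMetric] at hA
  exact spatialRotation_mul_transpose_self
    (mul_mul_transpose_eq_of_transpose_mul_mul_eq_s8 minkowskiMetric_mul_self hA) (by linarith)
end
end

section
/- Let N ≥ 2 be a natural number, and suppose given real numbers r(i) ∈ (0, π/2), ℓ(i) ∈ [π/2, π), and α(i) ∈ [0, π] for i ∈ ℤ/Nℤ, satisfying the spherical law of cosines relations cos ℓ(i) = cos r(i) · cos r(i+1) + sin r(i) · sin r(i+1) · cos α(i) for all i, together with ∑_i α(i) = 2π. Then N ≤ 3. -/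
open Real

/-! Each stellation triangle has two legs shorter than `π / 2` and third side at least `π / 2`;
by the law of cosines its angle at the centre is then obtuse. More than three angles larger than
`π / 2` cannot add up to `2π`. -/

lemma cos_neg_of_law_of_cosines {a b c γ : ℝ} (ha : a ∈ Set.Ioo 0 (π / 2))
    (hb : b ∈ Set.Ioo 0 (π / 2)) (hc : cos c ≤ 0)
    (hlaw : cos c = cos a * cos b + sin a * sin b * cos γ) : cos γ < 0 := by
  have hcos (x : ℝ) (hx : x ∈ Set.Ioo 0 (π / 2)) : 0 < cos x :=
    cos_pos_of_mem_Ioo ⟨by linarith [hx.1, pi_pos], hx.2⟩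
  have hsin (x : ℝ) (hx : x ∈ Set.Ioo 0 (π / 2)) : 0 < sin x :=
    sin_pos_of_pos_of_lt_pi hx.1 (by linarith [hx.2, pi_pos])
  have hcc : 0 < cos a * cos b := mul_pos (hcos a ha) (hcos b hb)
  have hss : 0 < sin a * sin b := mul_pos (hsin a ha) (hsin b hb)
  nlinarith

lemma pi_div_two_lt_of_cos_neg {x : ℝ} (hx : 0 ≤ x) (hcos : cos x < 0) : π / 2 < x := by
  by_contra! hle
  exact hcos.not_ge (cos_nonneg_of_mem_Icc ⟨by linarith [pi_pos], hle⟩)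

lemma card_lt_four_of_sum_eq_two_pi {ι : Type*} [Fintype ι] [Nonempty ι] {f : ι → ℝ}
    (hf : ∀ i, π / 2 < f i) (hsum : ∑ i, f i = 2 * π) : Fintype.card ι < 4 := by
  have hlt : (Fintype.card ι : ℝ) * (π / 2) < 2 * π :=
    calc (Fintype.card ι : ℝ) * (π / 2) = ∑ _i : ι, π / 2 := by simp
      _ < ∑ i, f i := Finset.sum_lt_sum_of_nonempty Finset.univ_nonempty fun i _ => hf i
      _ = 2 * π := hsum
  have : (Fintype.card ι : ℝ) < 4 := by nlinarith [pi_pos]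
  exact_mod_cast this

theorem spherical_polygon_is_triangle_general (N : ℕ) [NeZero N]
    (r ℓ α : ZMod N → ℝ)
    (hr : ∀ i, r i ∈ Set.Ioo (0 : ℝ) (π / 2))
    (hℓ : ∀ i, ℓ i ∈ Set.Ico (π / 2) π)
    (hα : ∀ i, α i ∈ Set.Icc (0 : ℝ) π)
    (hlaw : ∀ i, cos (ℓ i) = cos (r i) * cos (r (i + 1)) +
      sin (r i) * sin (r (i + 1)) * cos (α i))
    (hsum : ∑ i : ZMod N, α i = 2 * π) :
    N ≤ 3 := by
  have hobtuse (i : ZMod N) : π / 2 < α i := by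
    have hcosℓ : cos (ℓ i) ≤ 0 :=
      cos_nonpos_of_pi_div_two_le_of_le (hℓ i).1 (by linarith [(hℓ i).2, pi_pos])
    exact pi_div_two_lt_of_cos_neg (hα i).1
      (cos_neg_of_law_of_cosines (hr i) (hr (i + 1)) hcosℓ (hlaw i))
  have hcard := card_lt_four_of_sum_eq_two_pi hobtuse hsum
  rw [ZMod.card] at hcard
  omega

/-- A convex spherical polygon with all side lengths in [π/2, π), stellated
from an interior point of the containing hemisphere, is a triangle: if
r(i) ∈ (0, π/2), ℓ(i) ∈ [π/2, π), α(i) ∈ [0, π] satisfy the spherical law of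
cosines cos ℓ(i) = cos r(i) cos r(i+1) + sin r(i) sin r(i+1) cos α(i) and
∑ α(i) = 2π, then N ≤ 3. -/
theorem spherical_polygon_is_triangle (N : ℕ) [NeZero N] (hN : 2 ≤ N)
    (r ℓ α : ZMod N → ℝ)
    (hr : ∀ i, r i ∈ Set.Ioo (0 : ℝ) (π / 2))
    (hℓ : ∀ i, ℓ i ∈ Set.Ico (π / 2) π)
    (hα : ∀ i, α i ∈ Set.Icc (0 : ℝ) π)
    (hlaw : ∀ i, cos (ℓ i) = cos (r i) * cos (r (i + 1)) +
      sin (r i) * sin (r (i + 1)) * cos (α i))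
    (hsum : ∑ i : ZMod N, α i = 2 * π) :
    N ≤ 3 :=
  spherical_polygon_is_triangle_general N r ℓ α hr hℓ hα hlaw hsum
end

section
/- Let a, b, c ∈ [π/2, π) and let α ∈ [0, π] satisfy cos α = (cos a − cos b · cos c)/(sin b · sin c) (in particular the right-hand side lies in [−1, 1]). Then α ≥ a. -/
/-!
Both `cos b` and `cos c` are nonpositive, so `cos b * cos c ≥ 0` and the numerator of the law of
cosines is at most `cos a ≤ 0`. Dividing a nonpositive number by `sin b * sin c ∈ (0, 1]` can only
decrease it, hence `cos α ≤ cos a`, and `cos` is decreasing on `[0, π]`.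
-/

open Real Set

lemma div_le_self_of_nonpos {x s : ℝ} (hx : x ≤ 0) (hs₀ : 0 < s) (hs₁ : s ≤ 1) : x / s ≤ x := by
  have h := le_div_self (neg_nonneg.mpr hx) hs₀ hs₁
  rw [neg_div] at h
  linarith

lemma cos_nonpos_of_mem_Ico {x : ℝ} (hx : x ∈ Ico (π / 2) π) : cos x ≤ 0 :=
  cos_nonpos_of_pi_div_two_le_of_le hx.1 (by linarith [hx.2, pi_pos])

lemma sin_pos_of_mem_Ico {x : ℝ} (hx : x ∈ Ico (π / 2) π) : 0 < sin x :=
  sin_pos_of_pos_of_lt_pi (by linarith [hx.1, pi_pos]) hx.2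

lemma cos_sub_cos_mul_cos_div_le_cos {a b c : ℝ} (ha : cos a ≤ 0)
    (hb : b ∈ Ico (π / 2) π) (hc : c ∈ Ico (π / 2) π) :
    (cos a - cos b * cos c) / (sin b * sin c) ≤ cos a := by
  have hsin₀ : 0 < sin b * sin c := mul_pos (sin_pos_of_mem_Ico hb) (sin_pos_of_mem_Ico hc)
  have hsin₁ : sin b * sin c ≤ 1 :=
    mul_le_one₀ (sin_le_one b) (sin_pos_of_mem_Ico hc).le (sin_le_one c)
  have hcos : 0 ≤ cos b * cos c :=
    mul_nonneg_of_nonpos_of_nonpos (cos_nonpos_of_mem_Ico hb) (cos_nonpos_of_mem_Ico hc)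
  calc (cos a - cos b * cos c) / (sin b * sin c)
      ≤ cos a - cos b * cos c := div_le_self_of_nonpos (by linarith) hsin₀ hsin₁
    _ ≤ cos a := by linarith

/-- In a convex spherical triangle with all side lengths in [π/2, π), the angle
α at a vertex is no less than the opposite side a. -/
theorem angle_ge_opposite_side (a b c α : ℝ)
    (ha : a ∈ Set.Ico (π / 2) π) (hb : b ∈ Set.Ico (π / 2) π)
    (hc : c ∈ Set.Ico (π / 2) π) (hα : α ∈ Set.Icc (0 : ℝ) π)
    (hlaw : cos α = (cos a - cos b * cos c) / (sin b * sin c)) :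
    a ≤ α := by
  have hcos : cos α ≤ cos a :=
    hlaw ▸ cos_sub_cos_mul_cos_div_le_cos (cos_nonpos_of_mem_Ico ha) hb hc
  have ha' : a ∈ Icc 0 π := ⟨by linarith [ha.1, pi_pos], ha.2.le⟩
  exact (strictAntiOn_cos.le_iff_ge hα ha').mp hcos
end
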